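/- The Lie algebra of derivations of the 4-dimensional complex algebra B⁴₁₀ (with nonzero products e₁e₂ = e₃, e₁e₃ = e₄, e₂e₁ = e₄, e₃e₂ = e₄) has dimension 2. -/

import Mathlib

noncomputable def mB410 : (Fin 4 → ℂ) →ₗ[ℂ] (Fin 4 → ℂ) →ₗ[ℂ] (Fin 4 → ℂ) :=
  LinearMap.mk₂ ℂ (fun u v => ![0, 0, u 0 * v 1, u 0 * v 2 + u 1 * v 0 + u 2 * v 1])
    (fun x y v => by funext i; fin_cases i <;> simp <;> ring)
    (fun a x v => by funext i; fin_cases i <;> simp <;> ring)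
    (fun u x y => by funext i; fin_cases i <;> simp <;> ring)
    (fun u a x => by funext i; fin_cases i <;> simp <;> ring)

/-- The space of derivations of an algebra `(V, μ)`. -/
noncomputable def ders {V : Type*} [AddCommGroup V] [Module ℂ V]
    (μ : V →ₗ[ℂ] V →ₗ[ℂ] V) : Submodule ℂ (V →ₗ[ℂ] V) where
  carrier := {D | ∀ x y, D (μ x y) = μ (D x) y + μ x (D y)}
  add_mem' := by
    intro a b ha hb x y
    simp only [LinearMap.add_apply, ha x y, hb x y, map_add, LinearMap.add_apply]
    abel
  zero_mem' := by intro x y; simp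
  smul_mem' := by
    intro c D hD x y
    simp only [LinearMap.smul_apply, hD x y, map_smul, smul_add, LinearMap.smul_apply]

/-! Coordinates `0, 1, 2, 3` stand for `e₁, …, e₄`. A derivation `D` is determined by `D e₁` and
`D e₂`, because `e₃ = e₁e₂` and `e₄ = e₂e₁`. Applying `D` to `e₁e₁ = 0` and `e₂e₂ = 0` leaves only
the `e₁`, `e₄` components of `D e₁` and the `e₂`, `e₄` components of `D e₂`; computing `D e₄`
from `e₄ = e₂e₁`, `e₄ = e₁e₃` and `e₄ = e₃e₂` then forces the `e₁` component of `D e₁` and the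
`e₂` component of `D e₂` to vanish. Conversely, every `D` with `D e₁, D e₂ ∈ ℂe₄` and
`D e₃ = D e₄ = 0` is a derivation, since `e₄` annihilates the algebra and no product has an `e₁`
or `e₂` component. -/

noncomputable def derB410 : (Fin 2 → ℂ) →ₗ[ℂ] Module.End ℂ (Fin 4 → ℂ) :=
  LinearMap.mk₂ ℂ (fun c u => ![0, 0, 0, c 0 * u 0 + c 1 * u 1])
    (fun c c' u => by ext i; fin_cases i <;> simp [add_mul]; ring)
    (fun a c u => by ext i; fin_cases i <;> simp [mul_add, mul_assoc])
    (fun c u u' => by ext i; fin_cases i <;> simp [mul_add]; ring)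
    (fun c a u => by ext i; fin_cases i <;> simp; ring)

@[simp]
lemma mB410_apply (u v : Fin 4 → ℂ) :
    mB410 u v = ![0, 0, u 0 * v 1, u 0 * v 2 + u 1 * v 0 + u 2 * v 1] := rfl

@[simp]
lemma derB410_apply (c : Fin 2 → ℂ) (u : Fin 4 → ℂ) :
    derB410 c u = ![0, 0, 0, c 0 * u 0 + c 1 * u 1] := rfl

local notation "e" i:max => (Pi.single i 1 : Fin 4 → ℂ)

lemma mB410_single_single :
    mB410 (e 0) (e 0) = 0 ∧ mB410 (e 1) (e 1) = 0 ∧ mB410 (e 0) (e 1) = e 2 ∧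
      mB410 (e 1) (e 0) = e 3 ∧ mB410 (e 0) (e 2) = e 3 ∧ mB410 (e 2) (e 1) = e 3 := by
  refine ⟨?_, ?_, ?_, ?_, ?_, ?_⟩ <;> ext i <;> fin_cases i <;> simp

lemma derB410_mem_ders (c : Fin 2 → ℂ) : derB410 c ∈ ders mB410 := by
  intro u v
  ext i
  fin_cases i <;> simp

lemma derB410_injective : Function.Injective derB410 := by
  intro c c' h
  ext j
  fin_cases j
  · simpa using congrFun (LinearMap.congr_fun h (e 0)) 3
  · simpa using congrFun (LinearMap.congr_fun h (e 1)) 3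

lemma eq_derB410_of_mem_ders {D : Module.End ℂ (Fin 4 → ℂ)} (hD : D ∈ ders mB410) :
    D = derB410 ![D (e 0) 3, D (e 1) 3] := by
  obtain ⟨h00, h11, h01, h10, h02, h21⟩ := mB410_single_single
  have hcoord (u v : Fin 4 → ℂ) (i : Fin 4) := congrFun (hD u v) i
  have hp1 : D (e 0) 1 = 0 := by simpa [h00] using (hcoord (e 0) (e 0) 2).symm
  have hp2 : D (e 0) 2 = 0 := by simpa [h00, hp1] using (hcoord (e 0) (e 0) 3).symm
  have hq0 : D (e 1) 0 = 0 := by simpa [h11] using (hcoord (e 1) (e 1) 2).symm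
  have hq2 : D (e 1) 2 = 0 := by simpa [h11, hq0] using (hcoord (e 1) (e 1) 3).symm
  have hDe2 : D (e 2) = ![0, 0, D (e 0) 0 + D (e 1) 1, 0] := by
    rw [← h01, hD]; ext i; fin_cases i <;> simp [hp2, hq2]
  have hDe3 : D (e 3) = ![0, 0, 0, D (e 0) 0 + D (e 1) 1] := by
    rw [← h10, hD]; ext i; fin_cases i <;> simp [hp1, hq0]; ring
  have hp0 : D (e 0) 0 = 0 := by
    have := hcoord (e 0) (e 2) 3
    rw [h02, hDe3, hDe2] at this
    simpa using this
  have hq1 : D (e 1) 1 = 0 := by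
    have := hcoord (e 2) (e 1) 3
    rw [h21, hDe3, hDe2] at this
    simpa [hq2] using this
  ext i j
  fin_cases i <;> fin_cases j <;> simp [hp0, hp1, hp2, hq0, hq1, hq2, hDe2, hDe3]

theorem ders_mB410_eq_range : ders mB410 = LinearMap.range derB410 := by
  refine le_antisymm (fun D hD => ⟨_, (eq_derB410_of_mem_ders hD).symm⟩) ?_
  rintro _ ⟨c, rfl⟩
  exact derB410_mem_ders c

/-- The Lie algebra of derivations of `B⁴₁₀` has dimension `2`. -/
theorem B410_derivations_dim_two : Module.finrank ℂ (ders mB410) = 2 := by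
  rw [ders_mB410_eq_range, LinearMap.finrank_range_of_inj derB410_injective,
    Module.finrank_fin_fun]
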